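/- Let q, λ ∈ ℂ with |q| < 1, λ ≠ 0, and suppose λ²q^k ≠ 1 and λ² ≠ q^k for all integers k ≥ 1. Write λ̄ = 1/λ. Then (1 + λ²) [φ(λ,q³) φ(λ̄,q⁴) − λ² φ(λ̄,q³) φ(λ,q⁴)] = (1 − q²) [φ(λ,q²) φ(λ̄,q⁴) − λ⁴ φ(λ̄,q²) φ(λ,q⁴)]. -/

import Mathlib

/-!
The coefficients `c_k` of `φ(λ, ·)` satisfy
`(1 - q^(k+1)) (1 - λ² q^(k+1)) c_(k+1) = (1 + λ² q^(2k)) c_k`, and by the ratio test the series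
converges on the unit disc. Comparing coefficients then gives the q-difference equation
`(1 - x) φ(λ, x) - (1 + λ²) φ(λ, q x) + λ² (1 - x) φ(λ, q² x) = 0` for `|x| < 1`.
At `x = q²`, for `λ` and for `1/λ`, these are two linear relations between the values at
`q², q³, q⁴`; the identity is the combination of them in which the `φ(λ, q⁴) φ(1/λ, q⁴)` terms cancel.
-/

/-- The `q`-Pochhammer symbol `(a;q)_k = ∏_{j=0}^{k-1} (1 - a q^j)`. -/
noncomputable def qPoch (a q : ℂ) (k : ℕ) : ℂ := ∏ j ∈ Finset.range k, (1 - a * q ^ j)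

/-- `φ(λ,x) = Σ_k (-λ²;q²)_k x^k / ((q;q)_k (λ²q;q)_k) = ₂φ₁(iλ, -iλ; λ²q; q, x)`. -/
noncomputable def phi (q lam x : ℂ) : ℂ :=
  ∑' k : ℕ, qPoch (-lam ^ 2) (q ^ 2) k * x ^ k / (qPoch q q k * qPoch (lam ^ 2 * q) q k)

open Filter Topology

theorem summable_mul_pow_of_tendsto_ratio {c d e : ℕ → ℂ} {x : ℂ} (hx : ‖x‖ < 1)
    (hd : Tendsto d atTop (𝓝 1)) (he : Tendsto e atTop (𝓝 1))
    (hrec : ∀ k, d k * c (k + 1) = e k * c k) : Summable fun k ↦ c k * x ^ k := by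
  obtain ⟨r, hxr, hr1⟩ := exists_between hx
  refine summable_of_ratio_norm_eventually_le hr1 ?_
  have hlt : ∀ᶠ k in atTop, ‖x‖ * ‖e k‖ < r * ‖d k‖ :=
    (he.norm.const_mul ‖x‖).eventually_lt (hd.norm.const_mul r) (by simpa using hxr)
  filter_upwards [hlt] with k hk
  have hnorm : ‖d k‖ * ‖c (k + 1) * x ^ (k + 1)‖ = ‖x‖ * ‖e k‖ * ‖c k * x ^ k‖ := by
    simp only [← norm_mul]
    congr 1
    linear_combination x ^ (k + 1) * hrec k
  have hd_pos : 0 < ‖d k‖ := by nlinarith [norm_nonneg x, norm_nonneg (e k), norm_nonneg (d k)]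
  refine le_of_mul_le_mul_left ?_ hd_pos
  calc ‖d k‖ * ‖c (k + 1) * x ^ (k + 1)‖ = ‖x‖ * ‖e k‖ * ‖c k * x ^ k‖ := hnorm
    _ ≤ r * ‖d k‖ * ‖c k * x ^ k‖ := by gcongr
    _ = ‖d k‖ * (r * ‖c k * x ^ k‖) := by ring

theorem tsum_qDifference {c : ℕ → ℂ} {q a b x : ℂ} (hq : ‖q‖ < 1) (hx : ‖x‖ < 1)
    (hrec : ∀ k, (1 - q ^ (k + 1)) * (1 - b * q ^ (k + 1)) * c (k + 1) =
      (1 + a * q ^ (2 * k)) * c k) :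
    (1 - x) * ∑' k, c k * x ^ k - (1 + b) * ∑' k, c k * (q * x) ^ k
      + (b - a * x) * ∑' k, c k * (q ^ 2 * x) ^ k = 0 := by
  have hq_pow : Tendsto (fun k : ℕ ↦ q ^ (k + 1)) atTop (𝓝 0) :=
    (tendsto_pow_atTop_nhds_zero_of_norm_lt_one hq).comp (tendsto_add_atTop_nat 1)
  have hq_sq_pow : Tendsto (fun k : ℕ ↦ q ^ (2 * k)) atTop (𝓝 0) := by
    simpa only [pow_mul] using tendsto_pow_atTop_nhds_zero_of_norm_lt_one
      (by rw [norm_pow]; nlinarith [norm_nonneg q] : ‖q ^ 2‖ < 1)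
  have summable {y : ℂ} (hy : ‖y‖ < 1) : Summable fun k ↦ c k * y ^ k := by
    refine summable_mul_pow_of_tendsto_ratio hy ?_ ?_ hrec
    · simpa using ((tendsto_const_nhds (x := (1 : ℂ))).sub hq_pow).mul
        ((tendsto_const_nhds (x := (1 : ℂ))).sub (hq_pow.const_mul b))
    · simpa using (tendsto_const_nhds (x := (1 : ℂ))).add (hq_sq_pow.const_mul a)
  have hqx : ‖q * x‖ < 1 := by rw [norm_mul]; nlinarith [norm_nonneg q, norm_nonneg x]
  have hqqx : ‖q ^ 2 * x‖ < 1 := by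
    rw [norm_mul, norm_pow]; nlinarith [norm_nonneg q, norm_nonneg x]
  have hF := (summable hx).hasSum
  have hG := (summable hqx).hasSum
  have hH := (summable hqqx).hasSum
  have hA : HasSum (fun k ↦ (1 - q ^ k) * (1 - b * q ^ k) * c k * x ^ k)
      ((∑' k, c k * x ^ k) - (1 + b) * ∑' k, c k * (q * x) ^ k
        + b * ∑' k, c k * (q ^ 2 * x) ^ k) := by
    refine ((hF.sub (hG.mul_left (1 + b))).add (hH.mul_left b)).congr_fun fun k ↦ ?_
    ring
  have hB : HasSum (fun k ↦ (1 - q ^ (k + 1)) * (1 - b * q ^ (k + 1)) * c (k + 1) * x ^ (k + 1))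
      (x * (∑' k, c k * x ^ k) + a * x * ∑' k, c k * (q ^ 2 * x) ^ k) := by
    refine ((hF.mul_left x).add (hH.mul_left (a * x))).congr_fun fun k ↦ ?_
    linear_combination x ^ (k + 1) * hrec k
  have hA_shift := (hasSum_nat_add_iff' 1).2 hA
  simp only [Finset.range_one, Finset.sum_singleton, pow_zero, sub_self, zero_mul,
    sub_zero] at hA_shift
  linear_combination hA_shift.unique hB

theorem qPoch_succ (a q : ℂ) (k : ℕ) : qPoch a q (k + 1) = qPoch a q k * (1 - a * q ^ k) :=
  Finset.prod_range_succ _ _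

theorem qPoch_ne_zero {a q : ℂ} {k : ℕ} (h : ∀ j < k, a * q ^ j ≠ 1) : qPoch a q k ≠ 0 :=
  Finset.prod_ne_zero_iff.2 fun j hj ↦ sub_ne_zero.2 (h j (Finset.mem_range.1 hj)).symm

noncomputable def phiCoeff (q lam : ℂ) (k : ℕ) : ℂ :=
  qPoch (-lam ^ 2) (q ^ 2) k / (qPoch q q k * qPoch (lam ^ 2 * q) q k)

theorem phi_eq_tsum (q lam x : ℂ) : phi q lam x = ∑' k, phiCoeff q lam k * x ^ k :=
  tsum_congr fun _ ↦ (div_mul_eq_mul_div _ _ _).symm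

theorem phiCoeff_succ {q lam : ℂ} (hq : ‖q‖ < 1) (hlam : ∀ k : ℕ, 1 ≤ k → lam ^ 2 * q ^ k ≠ 1)
    (k : ℕ) :
    (1 - q ^ (k + 1)) * (1 - lam ^ 2 * q ^ (k + 1)) * phiCoeff q lam (k + 1) =
      (1 + lam ^ 2 * q ^ (2 * k)) * phiCoeff q lam k := by
  have hq_pow (j : ℕ) : q * q ^ j ≠ 1 := by
    rw [← pow_succ']
    refine ne_of_apply_ne norm ?_
    rw [norm_pow, norm_one]
    exact (pow_lt_one₀ (norm_nonneg q) hq j.succ_ne_zero).ne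
  have hlam_pow (j : ℕ) : lam ^ 2 * q * q ^ j ≠ 1 := by
    rw [mul_assoc, ← pow_succ']
    exact hlam _ j.succ_pos
  have h₁ : qPoch q q k ≠ 0 := qPoch_ne_zero fun j _ ↦ hq_pow j
  have h₂ : qPoch (lam ^ 2 * q) q k ≠ 0 := qPoch_ne_zero fun j _ ↦ hlam_pow j
  have h₃ : 1 - q * q ^ k ≠ 0 := sub_ne_zero.2 (hq_pow k).symm
  have h₄ : 1 - lam ^ 2 * q * q ^ k ≠ 0 := sub_ne_zero.2 (hlam_pow k).symm
  rw [phiCoeff, phiCoeff, qPoch_succ, qPoch_succ, qPoch_succ]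
  field_simp
  ring

theorem phi_qDifference {q lam x : ℂ} (hq : ‖q‖ < 1)
    (hlam : ∀ k : ℕ, 1 ≤ k → lam ^ 2 * q ^ k ≠ 1) (hx : ‖x‖ < 1) :
    (1 - x) * phi q lam x - (1 + lam ^ 2) * phi q lam (q * x)
      + lam ^ 2 * (1 - x) * phi q lam (q ^ 2 * x) = 0 := by
  have h := tsum_qDifference hq hx (phiCoeff_succ hq hlam)
  simp only [← phi_eq_tsum] at h
  linear_combination h

theorem identity_w1_qTangent_general (q lam : ℂ) (hq : ‖q‖ < 1)
    (hk : ∀ k : ℕ, 1 ≤ k → lam ^ 2 * q ^ k ≠ 1 ∧ lam ^ 2 ≠ q ^ k) :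
    (1 + lam ^ 2) *
        (phi q lam (q ^ 3) * phi q (1 / lam) (q ^ 4)
          - lam ^ 2 * phi q (1 / lam) (q ^ 3) * phi q lam (q ^ 4))
      = (1 - q ^ 2) *
          (phi q lam (q ^ 2) * phi q (1 / lam) (q ^ 4)
            - lam ^ 4 * phi q (1 / lam) (q ^ 2) * phi q lam (q ^ 4)) := by
  have hq2 : ‖q ^ 2‖ < 1 := by rw [norm_pow]; nlinarith [norm_nonneg q]
  have hlam_inv : ∀ k : ℕ, 1 ≤ k → (1 / lam) ^ 2 * q ^ k ≠ 1 := by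
    intro k hk1 h
    have hlam : lam ≠ 0 := by rintro rfl; simp at h
    field_simp at h
    exact (hk k hk1).2 h.symm
  -- also true at `lam = 0`, where `1 / lam = 0`
  have hscale : lam ^ 4 * (1 / lam) ^ 2 = lam ^ 2 := by
    rcases eq_or_ne lam 0 with rfl | hlam
    · simp
    · field_simp
  have e₁ := phi_qDifference hq (fun k hk1 ↦ (hk k hk1).1) hq2
  have e₂ := phi_qDifference hq hlam_inv hq2
  rw [show q * q ^ 2 = q ^ 3 by ring, show q ^ 2 * q ^ 2 = q ^ 4 by ring] at e₁ e₂
  linear_combination -phi q (1 / lam) (q ^ 4) * e₁ + lam ^ 4 * phi q lam (q ^ 4) * e₂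
    + (phi q (1 / lam) (q ^ 3) - (1 - q ^ 2) * phi q (1 / lam) (q ^ 4)) * phi q lam (q ^ 4) * hscale

theorem identity_w1_qTangent (q lam : ℂ) (hq : ‖q‖ < 1) (hlam : lam ≠ 0)
    (hk : ∀ k : ℕ, 1 ≤ k → lam ^ 2 * q ^ k ≠ 1 ∧ lam ^ 2 ≠ q ^ k) :
    (1 + lam ^ 2) *
        (phi q lam (q ^ 3) * phi q (1 / lam) (q ^ 4)
          - lam ^ 2 * phi q (1 / lam) (q ^ 3) * phi q lam (q ^ 4))
      = (1 - q ^ 2) *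
          (phi q lam (q ^ 2) * phi q (1 / lam) (q ^ 4)
            - lam ^ 4 * phi q (1 / lam) (q ^ 2) * phi q lam (q ^ 4)) :=
  identity_w1_qTangent_general q lam hq hk
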